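/- (Alternating approximation of √2 by the side and diameter numbers.) For every natural number n: if n is even then (q n : ℝ) / (p n) < Real.sqrt 2, and if n is odd then Real.sqrt 2 < (q n : ℝ) / (p n). Thus the convergence of q n / p n to √2 is alternately from below and from above. -/
import Mathlib


mutual
/-- The Pythagorean side numbers. -/
def p : ℕ → ℕ
  | 0 => 1
  | n + 1 => p n + q n
/-- The Pythagorean diameter numbers. -/
def q : ℕ → ℕ
  | 0 => 1
  | n + 1 => 2 * p n + q n
end

lemma p_pos (n : ℕ) : 0 < p n := by
  induction n with
  | zero => simp [p]
  | succ k ih => simp [p]; omega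

lemma pell (n : ℕ) :
    (Even n → q n ^ 2 + 1 = 2 * p n ^ 2) ∧ (Odd n → q n ^ 2 = 2 * p n ^ 2 + 1) := by
  induction n with
  | zero => simp [p, q]
  | succ k ih =>
    rcases Nat.even_or_odd k with hk | hk
    · have h := ih.1 hk
      constructor
      · intro h'; exact absurd (Nat.even_add_one.mp h') (by simpa using hk)
      · intro _; simp only [p, q]; ring_nf; ring_nf at h; omega
    · have h := ih.2 hk
      constructor
      · intro _; simp only [p, q]; ring_nf; ring_nf at h; omega
      · intro h'; obtain ⟨m,hm⟩ := hk; obtain ⟨m',hm'⟩ := h'; omega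

/-- The convergence of `q n / p n` to √2 is alternately from below and from above. -/
theorem ratio_alternating (n : ℕ) :
    (Even n → (q n : ℝ) / (p n) < Real.sqrt 2) ∧
    (Odd n → Real.sqrt 2 < (q n : ℝ) / (p n)) := by
  have hp : (0:ℝ) < (p n : ℝ) := by exact_mod_cast p_pos n
  constructor
  · intro h
    have h2 := (pell n).1 h
    rw [div_lt_iff₀ hp]
    have hq : ((q n : ℝ))^2 < (Real.sqrt 2 * p n)^2 := by
      rw [mul_pow, Real.sq_sqrt (by norm_num : (2:ℝ) ≥ 0)]
      have : ((q n : ℝ))^2 + 1 = 2 * (p n : ℝ)^2 := by exact_mod_cast h2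
      nlinarith
    exact lt_of_pow_lt_pow_left₀ 2 (by positivity) hq
  · intro h
    have h2 := (pell n).2 h
    rw [lt_div_iff₀ hp]
    have hq : (Real.sqrt 2 * p n)^2 < ((q n : ℝ))^2 := by
      rw [mul_pow, Real.sq_sqrt (by norm_num : (2:ℝ) ≥ 0)]
      have : ((q n : ℝ))^2 = 2 * (p n : ℝ)^2 + 1 := by exact_mod_cast h2
      nlinarith
    exact lt_of_pow_lt_pow_left₀ 2 (by positivity) hq
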